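/- Let n ≥ 2 and x ∈ W_n. Then ∑_{y ∈ W_{n−1}, y ≺ x} Δ_{n−1}(y) = Δ_n(x) / (n−1)!. Equivalently, the kernel Λⁿ_{n−1}(x, y) = (n−1)! · (Δ_{n−1}(y)/Δ_n(x)) · 1_{[y ≺ x]} defines a Markov (stochastic) link from W_n to W_{n−1}: it is nonnegative and for every x ∈ W_n with Δ_n(x) ≠ 0 (automatic on W_n), ∑_{y ∈ W_{n−1}} Λⁿ_{n−1}(x, y) = 1. -/

import Mathlib

open scoped Classical

/-- The Vandermonde determinant `Δ_n(x) = ∏_{1 ≤ i < j ≤ n} (x_j - x_i)` of an integer vector. -/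
def vandermondeProd {n : ℕ} (x : Fin n → ℤ) : ℤ :=
  ∏ p ∈ Finset.univ.filter (fun p : Fin n × Fin n => p.1 < p.2), (x p.2 - x p.1)

/-- `y` (one level down, `m` entries) interlaces with `x` (`m+1` entries):
`x_k < y_k ≤ x_{k+1}` for all `k`. -/
def Interlace {m : ℕ} (y : Fin m → ℤ) (x : Fin (m + 1) → ℤ) : Prop :=
  ∀ i : Fin m, x i.castSucc < y i ∧ y i ≤ x i.succ

/-- The Markov link `Λⁿ_{n-1}(x, y) = (n-1)! Δ_{n-1}(y)/Δ_n(x) · 1_{[y ≺ x]}`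
(here `n = m + 1`). -/
noncomputable def linkKernel {m : ℕ} (x : Fin (m + 1) → ℤ) (y : Fin m → ℤ) : ℚ :=
  (m.factorial : ℚ) * ((vandermondeProd y : ℚ) / (vandermondeProd x : ℚ)) *
    (if Interlace y x then 1 else 0)

/-!
Write `Δ(y) = det [(y_j)_(i)]` with the falling factorials `(t)_(i)`: they are monic of degree `i`,
so the Vandermonde determinant is unchanged. The `y ≺ x` form the box `∏_j (x_j, x_{j+1}]`, so
by multilinearity the sum of `Δ(y)` over them is the determinant of the row sums. As
`(i+1) (t)_(i) = (t+1)_(i+1) - (t)_(i+1)`, the row sums telescope once column `i` is scaled by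
`i+1`, which costs the factor `m!`; the result is the matrix of differences of consecutive rows
of `[(x_j+1)_(i)]`, whose determinant is `Δ(x+1) = Δ(x)`.
-/

open Finset Polynomial Matrix

section Vandermonde

variable {n : ℕ}

lemma vandermondeProd_eq_det (x : Fin n → ℤ) : vandermondeProd x = (vandermonde x).det := by
  rw [det_vandermonde, vandermondeProd, ← univ_product_univ, prod_filter, prod_product]
  refine prod_congr rfl fun i _ => ?_
  rw [← prod_filter]
  congr 1
  ext j
  simp

lemma vandermondeProd_add_const (x : Fin n → ℤ) (c : ℤ) :
    vandermondeProd (fun i => x i + c) = vandermondeProd x := by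
  simp only [vandermondeProd, add_sub_add_right_eq_sub]

lemma vandermondeProd_nonneg {x : Fin n → ℤ} (hx : Monotone x) : 0 ≤ vandermondeProd x :=
  prod_nonneg fun _ hp => sub_nonneg.2 (hx (mem_filter.1 hp).2.le)

lemma vandermondeProd_pos {x : Fin n → ℤ} (hx : StrictMono x) : 0 < vandermondeProd x :=
  prod_pos fun _ hp => sub_pos.2 (hx (mem_filter.1 hp).2)

lemma vandermondeProd_eq_det_descPochhammer (x : Fin n → ℤ) :
    vandermondeProd x = (of fun j i : Fin n => (descPochhammer ℤ i).eval (x j)).det := by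
  rw [vandermondeProd_eq_det, det_eval_matrixOfPolynomials_eq_det_vandermonde _ _
    (fun i => descPochhammer_natDegree ℤ i) (fun i => monic_descPochhammer ℤ i)]

end Vandermonde

lemma descPochhammer_eval_add_one_sub {R : Type*} [CommRing R] (i : ℕ) (t : R) :
    (descPochhammer R (i + 1)).eval (t + 1) - (descPochhammer R (i + 1)).eval t
      = (i + 1) * (descPochhammer R i).eval t := by
  rw [descPochhammer_succ_eval i t, descPochhammer_succ_left]
  simp only [eval_mul, eval_X, eval_comp, eval_sub, eval_one, add_sub_cancel_right]
  ring

lemma sum_Ioc_sub_telescope {M : Type*} [AddCommGroup M] (f : ℤ → M) {a b : ℤ} (hab : a ≤ b) :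
    ∑ t ∈ Ioc a b, (f (t + 1) - f t) = f (b + 1) - f (a + 1) := by
  induction b, hab using Int.leInduction with
  | base => simp
  | succ b hab ih =>
    rw [← insert_Ioc_right_eq_Ioc_add_one hab, sum_insert (by simp), ih]
    abel

lemma det_eq_det_succ_sub_castSucc {R : Type*} [CommRing R] {m : ℕ}
    (N : Matrix (Fin (m + 1)) (Fin (m + 1)) R) (hN : ∀ j, N j 0 = 1) :
    N.det = (of fun j i : Fin m => N j.succ i.succ - N j.castSucc i.succ).det := by
  let B : Matrix (Fin (m + 1)) (Fin (m + 1)) R :=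
    of fun j i => Fin.cases (N 0 i) (fun j' => N j'.succ i - N j'.castSucc i) j
  have hNB : N.det = B.det :=
    det_eq_of_forall_row_eq_smul_add_pred (fun _ => 1) (by simp [B]) (by simp [B])
  rw [hNB, det_succ_column_zero, Fin.sum_univ_succ]
  simp [B, hN, submatrix]

lemma det_of_sum_eq_sum_piFinset {n ι R : Type*} [Fintype n] [DecidableEq n] [CommRing R]
    (s : n → Finset ι) (f : ι → n → R) :
    (of fun j i => ∑ t ∈ s j, f t i).det
      = ∑ y ∈ Fintype.piFinset s, (of fun j i => f (y j) i).det := by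
  convert (detRowAlternating (R := R) (n := n)).map_sum_finset (fun _ t => f t) s using 1
  · congr 1
    ext j i
    simp [Finset.sum_apply]
  · rfl

section Interlacing

variable {m : ℕ}

noncomputable def interlacingFinset (x : Fin (m + 1) → ℤ) : Finset (Fin m → ℤ) :=
  Fintype.piFinset fun j => Ioc (x j.castSucc) (x j.succ)

lemma mem_interlacingFinset {x : Fin (m + 1) → ℤ} {y : Fin m → ℤ} :
    y ∈ interlacingFinset x ↔ Interlace y x := by
  simp only [interlacingFinset, Fintype.mem_piFinset, mem_Ioc, Interlace]

lemma Interlace.strictMono {x : Fin (m + 1) → ℤ} (hx : Monotone x) {y : Fin m → ℤ}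
    (hy : Interlace y x) : StrictMono y := fun i j hij =>
  calc y i ≤ x i.succ := (hy i).2
    _ ≤ x j.castSucc := hx (Fin.succ_le_castSucc_iff.2 hij)
    _ < y j := (hy j).1

lemma setOf_strictMono_interlace_eq {x : Fin (m + 1) → ℤ} (hx : Monotone x) :
    {y : Fin m → ℤ | StrictMono y ∧ Interlace y x} = interlacingFinset x := by
  ext y
  simp only [Set.mem_ofPred_eq, mem_coe, mem_interlacingFinset]
  exact ⟨And.right, fun hy => ⟨hy.strictMono hx, hy⟩⟩

theorem factorial_mul_sum_interlacingFinset_vandermondeProd {x : Fin (m + 1) → ℤ}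
    (hx : Monotone x) :
    (m.factorial : ℤ) * ∑ y ∈ interlacingFinset x, vandermondeProd y = vandermondeProd x := by
  let P : ℕ → ℤ → ℤ := fun i t => (descPochhammer ℤ i).eval t
  have hfactorial : ∏ i : Fin m, ((i : ℤ) + 1) = m.factorial := by
    rw [Fin.prod_univ_eq_prod_range (fun i => (i : ℤ) + 1), ← prod_range_add_one_eq_factorial]
    push_cast
    rfl
  calc (m.factorial : ℤ) * ∑ y ∈ interlacingFinset x, vandermondeProd y
      = (∏ i : Fin m, ((i : ℤ) + 1)) *
          (of fun j i : Fin m => ∑ t ∈ Ioc (x j.castSucc) (x j.succ), P i t).det := by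
        rw [hfactorial, det_of_sum_eq_sum_piFinset]
        simp_rw [vandermondeProd_eq_det_descPochhammer]
        rfl
    _ = (of fun j i : Fin m => P (i + 1) (x j.succ + 1) - P (i + 1) (x j.castSucc + 1)).det := by
        rw [← det_mul_row]
        congr 1
        ext j i
        simp only [of_apply]
        rw [mul_sum,
          ← sum_Ioc_sub_telescope (P (i + 1)) (hx (Fin.castSucc_le_succ j))]
        simp only [P, descPochhammer_eval_add_one_sub]
    _ = (of fun j i : Fin (m + 1) => P i (x j + 1)).det := by
        rw [det_eq_det_succ_sub_castSucc _ fun _ => by simp [P]]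
        simp only [of_apply, Fin.val_succ]
    _ = vandermondeProd x := by
        rw [← vandermondeProd_eq_det_descPochhammer, vandermondeProd_add_const]

end Interlacing

section LinkKernel

variable {m : ℕ} {x : Fin (m + 1) → ℤ}

lemma linkKernel_nonneg (hx : Monotone x) (y : Fin m → ℤ) : 0 ≤ linkKernel x y := by
  unfold linkKernel
  split_ifs with hy
  · have hΔy : (0 : ℚ) ≤ vandermondeProd y := by
      exact_mod_cast vandermondeProd_nonneg (hy.strictMono hx).monotone
    have hΔx : (0 : ℚ) ≤ vandermondeProd x := by exact_mod_cast vandermondeProd_nonneg hx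
    positivity
  · simp

lemma linkKernel_of_interlace {y : Fin m → ℤ} (hy : Interlace y x) :
    linkKernel x y = m.factorial * vandermondeProd y / vandermondeProd x := by
  rw [linkKernel, if_pos hy, mul_one, mul_div_assoc]

lemma interlace_of_mem_support_linkKernel {y : Fin m → ℤ}
    (hy : y ∈ Function.support (linkKernel x)) : Interlace y x := by
  by_contra h
  exact hy (by simp [linkKernel, h])

lemma finsum_linkKernel (hx : StrictMono x) :
    ∑ᶠ y ∈ {y : Fin m → ℤ | StrictMono y}, linkKernel x y = 1 := by
  have hΔx : (vandermondeProd x : ℚ) ≠ 0 := by exact_mod_cast (vandermondeProd_pos hx).ne'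
  have hsupport : ∀ y ∈ Function.support (linkKernel x),
      y ∈ {y : Fin m → ℤ | StrictMono y} ↔ y ∈ (interlacingFinset x : Set (Fin m → ℤ)) := by
    intro y hy
    have hyx := interlace_of_mem_support_linkKernel hy
    simp only [Set.mem_ofPred_eq, mem_coe, mem_interlacingFinset, hyx, hyx.strictMono hx.monotone]
  rw [finsum_mem_inter_support_eq' _ _ _ hsupport, finsum_mem_coe_finset,
    sum_congr rfl fun y hy => linkKernel_of_interlace (mem_interlacingFinset.1 hy),
    ← sum_div, ← mul_sum, div_eq_one_iff_eq hΔx]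
  exact_mod_cast factorial_mul_sum_interlacingFinset_vandermondeProd hx.monotone

end LinkKernel

theorem link_row_sums_general (m : ℕ) (x : Fin (m + 1) → ℤ) (hx : StrictMono x) :
    ((m.factorial : ℤ) *
        (∑ᶠ y ∈ {y : Fin m → ℤ | StrictMono y ∧ Interlace y x}, vandermondeProd y)
      = vandermondeProd x)
    ∧ (∀ y : Fin m → ℤ, 0 ≤ linkKernel x y)
    ∧ (∑ᶠ y ∈ {y : Fin m → ℤ | StrictMono y}, linkKernel x y) = 1 := by
  refine ⟨?_, linkKernel_nonneg hx.monotone, finsum_linkKernel hx⟩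
  rw [setOf_strictMono_interlace_eq hx.monotone, finsum_mem_coe_finset]
  exact factorial_mul_sum_interlacingFinset_vandermondeProd hx.monotone

/-- For `x ∈ W_n` (with `n = m+1 ≥ 2`): `∑_{y ∈ W_{n-1}, y ≺ x} Δ_{n-1}(y) = Δ_n(x)/(n-1)!`;
equivalently, the kernel `Λⁿ_{n-1}` is nonnegative and its rows sum to `1`, i.e. it is a
Markov link from `W_n` to `W_{n-1}`. -/
theorem link_row_sums (m : ℕ) (hm : 1 ≤ m) (x : Fin (m + 1) → ℤ) (hx : StrictMono x) :
    ((m.factorial : ℤ) *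
        (∑ᶠ y ∈ {y : Fin m → ℤ | StrictMono y ∧ Interlace y x}, vandermondeProd y)
      = vandermondeProd x)
    ∧ (∀ y : Fin m → ℤ, 0 ≤ linkKernel x y)
    ∧ (∑ᶠ y ∈ {y : Fin m → ℤ | StrictMono y}, linkKernel x y) = 1 :=
  link_row_sums_general m x hx
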